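/- arXiv:2501.16680 — 5 statements merged into one kernel-verified Lean document; each statement's English description precedes it below -/
import Mathlib

section
/- Let U be a nonempty finite type and E any type. Let M : Finset U → PMF E be a mechanism that is (ε,δ)-differentially private, and let dec : E → U → Bool be a decoder such that (M, dec) has error probability at most α, where ε ≥ 0, 0 ≤ δ ≤ 1 and 0 < α ≤ 1/2. Then ε ≥ ln((1 − α − δ)/α). -/
/-- `M` is `(ε,δ)`-differentially private: for all sets whose symmetric difference
has exactly one element, and every output event `R`, the probability under `M S`
is at most `e^ε` times that under `M S'`, plus `δ`. -/
def IsDP {U E : Type*} [DecidableEq U] (M : Finset U → PMF E) (ε δ : ℝ) : Prop :=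
  ∀ S S' : Finset U, (symmDiff S S').card = 1 → ∀ R : Set E,
    (M S).toOuterMeasure R ≤
      ENNReal.ofReal (Real.exp ε) * (M S').toOuterMeasure R + ENNReal.ofReal δ

/-- `(M, dec)` has error probability at most `α`: for every input set `S` and every
query `q`, the probability over `z ∼ M S` that `dec z q` differs from the indicator
of `q ∈ S` is at most `α`. -/
def HasErrorProb {U E : Type*} [DecidableEq U] (M : Finset U → PMF E)
    (dec : E → U → Bool) (α : ℝ) : Prop :=
  ∀ (S : Finset U) (q : U),
    (M S).toOuterMeasure {z | dec z q ≠ decide (q ∈ S)} ≤ ENNReal.ofReal α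

/-!
Fix a query `q` and let `R` be the event that the decoder answers `q ∈ S`. On input `{q}` the
complement of `R` is an error, so `R` has probability at least `1 - α`; on input `∅` the event
`R` itself is an error, so it has probability at most `α`. The inputs `{q}` and `∅` are neighbours,
hence privacy gives `1 - α ≤ e^ε α + δ`.
-/

theorem PMF.toOuterMeasure_add_toOuterMeasure_compl {α : Type*} (p : PMF α) (s : Set α) :
    p.toOuterMeasure s + p.toOuterMeasure sᶜ = 1 := by
  rw [PMF.toOuterMeasure_apply, PMF.toOuterMeasure_apply, ← ENNReal.tsum_add]
  simp only [Set.indicator_self_add_compl_apply, p.tsum_coe]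

theorem Finset.card_symmDiff_singleton_empty {α : Type*} [DecidableEq α] (a : α) :
    (symmDiff ({a} : Finset α) ∅).card = 1 := by
  rw [← Finset.bot_eq_empty, symmDiff_bot, Finset.card_singleton]

theorem IsDP.one_sub_sub_le_exp_mul_of_hasErrorProb {U E : Type*} [Nonempty U] [DecidableEq U]
    {M : Finset U → PMF E} {dec : E → U → Bool} {ε δ α : ℝ} (hδ : 0 ≤ δ) (hα : 0 ≤ α)
    (hDP : IsDP M ε δ) (hErr : HasErrorProb M dec α) :
    1 - α - δ ≤ Real.exp ε * α := by
  obtain ⟨q⟩ := ‹Nonempty U›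
  set R : Set E := {z | dec z q = true}
  have herr_in : (M {q}).toOuterMeasure Rᶜ ≤ ENNReal.ofReal α := by
    simpa [R, Set.compl_ofPred] using hErr {q} q
  have herr_out : (M ∅).toOuterMeasure R ≤ ENNReal.ofReal α := by
    simpa [R] using hErr ∅ q
  have key : ENNReal.ofReal 1 ≤ ENNReal.ofReal (Real.exp ε * α + δ + α) :=
    calc ENNReal.ofReal 1
        = (M {q}).toOuterMeasure R + (M {q}).toOuterMeasure Rᶜ := by
          rw [ENNReal.ofReal_one, PMF.toOuterMeasure_add_toOuterMeasure_compl]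
      _ ≤ ENNReal.ofReal (Real.exp ε) * (M ∅).toOuterMeasure R + ENNReal.ofReal δ
            + ENNReal.ofReal α :=
          add_le_add (hDP {q} ∅ (Finset.card_symmDiff_singleton_empty q) R) herr_in
      _ ≤ ENNReal.ofReal (Real.exp ε) * ENNReal.ofReal α + ENNReal.ofReal δ
            + ENNReal.ofReal α := by gcongr
      _ = ENNReal.ofReal (Real.exp ε * α + δ + α) := by
          rw [← ENNReal.ofReal_mul (Real.exp_nonneg ε), ← ENNReal.ofReal_add (by positivity) hδ,
            ← ENNReal.ofReal_add (by positivity) hα]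
  linarith [(ENNReal.ofReal_le_ofReal_iff (by positivity)).1 key]

theorem Real.log_le_of_le_exp_of_neg_one_le {x ε : ℝ} (hε : 0 ≤ ε) (hx : x ≤ Real.exp ε)
    (hx' : -1 ≤ x) : Real.log x ≤ ε := by
  rcases le_or_gt x 0 with hneg | hpos
  · calc Real.log x = Real.log |x| := (Real.log_abs x).symm
      _ ≤ 0 := Real.log_nonpos (abs_nonneg x) (abs_le.2 ⟨hx', by linarith⟩)
      _ ≤ ε := hε
  · exact (Real.log_le_iff_le_exp hpos).2 hx

theorem privacy_utility_epsilon_lower_bound_general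
    {U E : Type*} [Nonempty U] [DecidableEq U]
    (M : Finset U → PMF E) (dec : E → U → Bool) (ε δ α : ℝ)
    (hε : 0 ≤ ε) (hδ0 : 0 ≤ δ) (hδ1 : δ ≤ 1) (hα0 : 0 < α)
    (hDP : IsDP M ε δ) (hErr : HasErrorProb M dec α) :
    ε ≥ Real.log ((1 - α - δ) / α) := by
  have hbound := hDP.one_sub_sub_le_exp_mul_of_hasErrorProb hδ0 hα0.le hErr
  refine Real.log_le_of_le_exp_of_neg_one_le hε ?_ ?_
  · rwa [div_le_iff₀ hα0]
  · rw [le_div_iff₀ hα0]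
    linarith

theorem privacy_utility_epsilon_lower_bound
    {U E : Type*} [Fintype U] [Nonempty U] [DecidableEq U]
    (M : Finset U → PMF E) (dec : E → U → Bool) (ε δ α : ℝ)
    (hε : 0 ≤ ε) (hδ0 : 0 ≤ δ) (hδ1 : δ ≤ 1) (hα0 : 0 < α) (hα : α ≤ 1 / 2)
    (hDP : IsDP M ε δ) (hErr : HasErrorProb M dec α) :
    ε ≥ Real.log ((1 - α - δ) / α) :=
  privacy_utility_epsilon_lower_bound_general M dec ε δ α hε hδ0 hδ1 hα0 hDP hErr
end

section
/- Let U and F be nonempty finite types, let S : Finset U, let u ∈ U with u ∉ S, and let g : (U → F) → F be a function that depends only on the restriction to S, i.e., g h = g h' whenever h s = h' s for all s ∈ S. If h is drawn uniformly at random from all functions U → F, then the probability that h u = g h equals 1/|F|. -/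
/-!
Since `g` ignores the coordinate `u`, the map `h ↦ (h[u ↦ g h], h u)` identifies `U → F` with
`{h | h u = g h} × F`: overwriting `h u` does not change `g`, and the old value of `h u` can be
put back. Hence the event `h u = g h` has exactly a `1 / |F|` share of all functions.
-/

open Function

theorem apply_update_eq_of_notMem {U F β : Type*} [DecidableEq U] {S : Finset U} {u : U}
    (hu : u ∉ S) {g : (U → F) → β} (hg : ∀ h h' : U → F, (∀ s ∈ S, h s = h' s) → g h = g h')
    (h : U → F) (x : F) : g (update h u x) = g h :=
  hg _ _ fun _ hs => update_of_ne (ne_of_mem_of_not_mem hs hu) _ _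

def piEquivSubtypeApplyEqProd {U F : Type*} [DecidableEq U] {u : U} {g : (U → F) → F}
    (hgu : ∀ h x, g (update h u x) = g h) :
    (U → F) ≃ {h : U → F // h u = g h} × F where
  toFun h := (⟨update h u (g h), by rw [update_self, hgu]⟩, h u)
  invFun p := update p.1.1 u p.2
  left_inv h := by simp
  right_inv := fun ⟨⟨h, hh⟩, x⟩ => by
    ext
    · simp only [update_idem, hgu, ← hh, update_eq_self]
    · simp

theorem PMF.toOuterMeasure_uniformOfFintype_eq_one_div_of_equiv {α F : Type*}
    [Fintype α] [Nonempty α] [Fintype F] (s : Set α) [Fintype s] (e : α ≃ s × F) :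
    (PMF.uniformOfFintype α).toOuterMeasure s = 1 / (Fintype.card F : ENNReal) := by
  have : Nonempty s := ⟨(e (Classical.arbitrary α)).1⟩
  have hs : (Fintype.card s : ENNReal) ≠ 0 := by exact_mod_cast Fintype.card_ne_zero
  rw [PMF.toOuterMeasure_uniformOfFintype_apply, Fintype.card_congr e, Fintype.card_prod,
    Nat.cast_mul, ← ENNReal.mul_div_mul_left 1 _ hs (ENNReal.natCast_ne_top _), mul_one]

theorem uniform_hash_matches_local_function_general
    {U F : Type*} [Fintype U] [DecidableEq U] [Fintype F] [Nonempty F]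
    (S : Finset U) (u : U) (hu : u ∉ S)
    (g : (U → F) → F)
    (hg : ∀ h h' : U → F, (∀ s ∈ S, h s = h' s) → g h = g h') :
    (PMF.uniformOfFintype (U → F)).toOuterMeasure {h : U → F | h u = g h} =
      1 / (Fintype.card F : ENNReal) := by
  classical
  exact PMF.toOuterMeasure_uniformOfFintype_eq_one_div_of_equiv _
    (piEquivSubtypeApplyEqProd (apply_update_eq_of_notMem hu hg))

theorem uniform_hash_matches_local_function
    {U F : Type*} [Fintype U] [DecidableEq U] [Nonempty U] [Fintype F] [Nonempty F]
    (S : Finset U) (u : U) (hu : u ∉ S)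
    (g : (U → F) → F)
    (hg : ∀ h h' : U → F, (∀ s ∈ S, h s = h' s) → g h = g h') :
    (PMF.uniformOfFintype (U → F)).toOuterMeasure {h : U → F | h u = g h} =
      1 / (Fintype.card F : ENNReal) :=
  uniform_hash_matches_local_function_general S u hu g hg
end

section
/- Let U and F be nonempty finite types, let S : Finset U, let Q : Finset U be disjoint from S, and for each q ∈ U let g q : (U → F) → F be a function that depends only on the restriction to S, i.e., g q h = g q h' whenever h s = h' s for all s ∈ S. If h is drawn uniformly at random from all functions U → F, then the probability that h q = g q h holds simultaneously for all q ∈ Q equals (1/|F|)^{|Q|}. -/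
/-!
Since every `g q` only reads `h` on `S`, which is disjoint from `Q`, the solutions of the
constraints `h q = g q h` (`q ∈ Q`) are in bijection with the free choices of `h` off `Q`: the
values on `Q` are then forced. So exactly `|F| ^ (|U| - |Q|)` of the `|F| ^ |U|` functions
satisfy the constraints.
-/

open scoped ENNReal

section LocalConstraints

variable {U F : Type*} {Q : Set U} [DecidablePred (· ∈ Q)]

def glueCompl (f : U → F) (h : {u // u ∉ Q} → F) : U → F :=
  fun u => if hu : u ∈ Q then f u else h ⟨u, hu⟩

lemma glueCompl_of_notMem (f : U → F) (h : {u // u ∉ Q} → F) {u : U} (hu : u ∉ Q) :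
    glueCompl f h u = h ⟨u, hu⟩ :=
  dif_neg hu

lemma glueCompl_of_mem (f : U → F) (h : {u // u ∉ Q} → F) {u : U} (hu : u ∈ Q) :
    glueCompl f h u = f u :=
  dif_pos hu

variable [Nonempty F] (g : U → (U → F) → F)
    (hg : ∀ q (h h' : U → F), (∀ u ∉ Q, h u = h' u) → g q h = g q h')
include hg

noncomputable def solutionsEquivCompl :
    {h : U → F // ∀ q ∈ Q, h q = g q h} ≃ ({u // u ∉ Q} → F) where
  toFun h u := h.1 u
  invFun h := ⟨glueCompl (fun q => g q (glueCompl (fun _ => Classical.arbitrary F) h)) h,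
    fun q hq => by
      rw [glueCompl_of_mem _ _ hq]
      exact hg q _ _ fun u hu => by rw [glueCompl_of_notMem _ _ hu, glueCompl_of_notMem _ _ hu]⟩
  left_inv := by
    rintro ⟨h, hh⟩
    ext u
    dsimp only
    by_cases hu : u ∈ Q
    · rw [glueCompl_of_mem _ _ hu, hh u hu]
      exact hg u _ _ fun v hv => glueCompl_of_notMem _ _ hv
    · exact glueCompl_of_notMem _ _ hu
  right_inv h := funext fun u => by dsimp only; exact glueCompl_of_notMem _ h u.2

end LocalConstraints

theorem card_solutions_eq {U F : Type*} [Fintype U] [Fintype F] [Nonempty F] (Q : Finset U)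
    (g : U → (U → F) → F)
    (hg : ∀ q (h h' : U → F), (∀ u ∉ Q, h u = h' u) → g q h = g q h') :
    Nat.card {h : U → F // ∀ q ∈ Q, h q = g q h} =
      Fintype.card F ^ (Fintype.card U - Q.card) := by
  classical
  calc Nat.card {h : U → F // ∀ q ∈ Q, h q = g q h}
      = Nat.card ({u // u ∉ (Q : Set U)} → F) := Nat.card_congr (solutionsEquivCompl g hg)
    _ = Fintype.card F ^ (Fintype.card U - Q.card) := by
      rw [Nat.card_eq_fintype_card, Fintype.card_fun, Fintype.card_subtype_compl]
      simp only [Finset.mem_coe, Fintype.card_coe]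

theorem ENNReal.pow_sub_div_pow {c : ℝ≥0∞} (hc₀ : c ≠ 0) (hc : c ≠ ⊤) {k n : ℕ} (hk : k ≤ n) :
    c ^ (n - k) / c ^ n = (1 / c) ^ k := by
  obtain ⟨m, rfl⟩ := Nat.exists_eq_add_of_le hk
  have hm₀ : c ^ m ≠ 0 := pow_ne_zero m hc₀
  have hm : c ^ m ≠ ⊤ := ENNReal.pow_ne_top hc
  rw [Nat.add_sub_cancel_left, add_comm, pow_add, ENNReal.div_eq_inv_mul,
    ENNReal.mul_inv (.inl hm₀) (.inl hm), mul_right_comm, ENNReal.inv_mul_cancel hm₀ hm, one_mul,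
    one_div, ENNReal.inv_pow]

theorem uniform_hash_matches_local_functions_indep_general
    {U F : Type*} [Fintype U] [DecidableEq U] [Fintype F] [Nonempty F]
    (S Q : Finset U) (hQ : Disjoint Q S)
    (g : U → (U → F) → F)
    (hg : ∀ (q : U) (h h' : U → F), (∀ s ∈ S, h s = h' s) → g q h = g q h') :
    (PMF.uniformOfFintype (U → F)).toOuterMeasure {h : U → F | ∀ q ∈ Q, h q = g q h} =
      (1 / (Fintype.card F : ENNReal)) ^ Q.card := by
  classical
  have hg_off : ∀ q (h h' : U → F), (∀ u ∉ Q, h u = h' u) → g q h = g q h' :=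
    fun q h h' hoff => hg q h h' fun s hs => hoff s (Finset.disjoint_right.mp hQ hs)
  rw [PMF.toOuterMeasure_uniformOfFintype_apply, ← Nat.card_eq_fintype_card, Set.coe_ofPred,
    card_solutions_eq Q g hg_off, Fintype.card_fun]
  push_cast
  exact ENNReal.pow_sub_div_pow (by simp) (by simp) Q.card_le_univ

theorem uniform_hash_matches_local_functions_indep
    {U F : Type*} [Fintype U] [DecidableEq U] [Nonempty U] [Fintype F] [Nonempty F]
    (S Q : Finset U) (hQ : Disjoint Q S)
    (g : U → (U → F) → F)
    (hg : ∀ (q : U) (h h' : U → F), (∀ s ∈ S, h s = h' s) → g q h = g q h') :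
    (PMF.uniformOfFintype (U → F)).toOuterMeasure {h : U → F | ∀ q ∈ Q, h q = g q h} =
      (1 / (Fintype.card F : ENNReal)) ^ Q.card :=
  uniform_hash_matches_local_functions_indep_general S Q hQ g hg
end

section
/- Let U be a type with decidable equality, Ω any type, and let 0 ≤ p ≤ 1. Let sub : Finset U → PMF (Finset U) be the p-subsampling distribution, let K : Finset U → PMF Ω, let S : Finset U and u ∈ U with u ∉ S. Then for every v ∈ Ω, ((sub (insert u S)).bind K) v = p · ((sub S).bind K) v + (1−p) · ((sub S).bind (fun T => K (insert u T))) v. -/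
/-- `sub` is the `p`-subsampling distribution: on input `S` it outputs `T ⊆ S`
with probability `(1-p)^|T| · p^(|S|-|T|)` (each element of `S` is kept
independently with probability `1-p`). -/
def IsSubsample {U : Type*} [DecidableEq U] (p : ℝ) (sub : Finset U → PMF (Finset U)) : Prop :=
  ∀ S T : Finset U,
    sub S T = if T ⊆ S then ENNReal.ofReal ((1 - p) ^ T.card * p ^ (S.card - T.card)) else 0

/-! A subset of `insert u S` is either a subset `T` of `S`, where `u` was dropped, or `insert u T`,
where `u` was kept; its weight is that of `T` under `sub S` times `p`, resp. `1 - p`. So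
`sub (insert u S)` is the `p`-mixture of `sub S` and its image under `insert u`, and `bind K` is
linear in the mixture. -/

theorem PMF.bind_apply_eq_sum {α β : Type*} (μ : PMF α) (K : α → PMF β) {s : Finset α}
    (hμ : ∀ a ∉ s, μ a = 0) (b : β) : μ.bind K b = ∑ a ∈ s, μ a * K a b :=
  tsum_eq_sum fun a ha => by rw [hμ a ha, zero_mul]

namespace IsSubsample

variable {U : Type*} [DecidableEq U] {p : ℝ} {sub : Finset U → PMF (Finset U)}

theorem apply_eq_zero_of_not_subset (hsub : IsSubsample p sub) {S T : Finset U} (hT : ¬T ⊆ S) :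
    sub S T = 0 := by
  rw [hsub, if_neg hT]

theorem bind_apply_eq_sum (hsub : IsSubsample p sub) {Ω : Type*} (K : Finset U → PMF Ω)
    (S : Finset U) (v : Ω) : (sub S).bind K v = ∑ T ∈ S.powerset, sub S T * K T v :=
  PMF.bind_apply_eq_sum _ _ (fun _ hT => hsub.apply_eq_zero_of_not_subset (by simpa using hT)) v

theorem apply_insert_of_subset (hsub : IsSubsample p sub) (hp0 : 0 ≤ p) {S T : Finset U} {u : U}
    (hu : u ∉ S) (hT : T ⊆ S) : sub (insert u S) T = ENNReal.ofReal p * sub S T := by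
  have hcard : T.card ≤ S.card := Finset.card_le_card hT
  rw [hsub, hsub, if_pos (hT.trans (Finset.subset_insert u S)), if_pos hT,
    Finset.card_insert_of_notMem hu, ← ENNReal.ofReal_mul hp0, Nat.sub_add_comm hcard, pow_succ]
  ring_nf

theorem apply_insert_insert_of_subset (hsub : IsSubsample p sub) (hp1 : p ≤ 1) {S T : Finset U}
    {u : U} (hu : u ∉ S) (hT : T ⊆ S) :
    sub (insert u S) (insert u T) = ENNReal.ofReal (1 - p) * sub S T := by
  have huT : u ∉ T := fun h => hu (hT h)
  rw [hsub, hsub, if_pos (Finset.insert_subset_insert u hT), if_pos hT,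
    Finset.card_insert_of_notMem hu, Finset.card_insert_of_notMem huT, Nat.add_sub_add_right,
    ← ENNReal.ofReal_mul (sub_nonneg.mpr hp1), pow_succ]
  ring_nf

end IsSubsample

theorem subsample_insert_decomposition
    {U Ω : Type*} [DecidableEq U]
    (p : ℝ) (hp0 : 0 ≤ p) (hp1 : p ≤ 1)
    (sub : Finset U → PMF (Finset U)) (hsub : IsSubsample p sub)
    (K : Finset U → PMF Ω) (S : Finset U) (u : U) (hu : u ∉ S) :
    ∀ v : Ω,
      ((sub (insert u S)).bind K) v =
        ENNReal.ofReal p * ((sub S).bind K) v +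
          ENNReal.ofReal (1 - p) * ((sub S).bind (fun T => K (insert u T))) v := by
  intro v
  rw [hsub.bind_apply_eq_sum, hsub.bind_apply_eq_sum, hsub.bind_apply_eq_sum,
    Finset.sum_powerset_insert hu, Finset.mul_sum, Finset.mul_sum]
  congr 1 <;> refine Finset.sum_congr rfl fun T hT => ?_ <;> rw [Finset.mem_powerset] at hT
  · rw [hsub.apply_insert_of_subset hp0 hu hT, mul_assoc]
  · rw [hsub.apply_insert_insert_of_subset hp1 hu hT, mul_assoc]
end

section
/- Let U and F be nonempty finite types with f := |F| ≥ 2, and set α := 1/f and p := 1/(f−1). Let S : Finset U. Let G : Finset U → (U → F) → (U → F) satisfy: (i) for every T, h and every q ∈ T, G T h q = h q; and (ii) for every T, G T h = G T h' whenever h and h' agree on T. Draw T from the p-subsampling distribution applied to S and, independently, draw h uniformly at random from all functions U → F, and declare the answer for a query q to be positive iff h q = G T h q. Then for every q ∉ S, the probability that the answer is positive equals α (false positive probability), and for every q ∈ S, the probability that the answer is negative equals p·(1 − 1/f) = α (false negative probability). -/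
/-!
If `q ∉ T`, then by locality `G T h q` does not depend on the value `h q`, which is uniform
and independent of the rest of `h`; so `h q = G T h q` has probability `1/f`. If `q ∈ T` the
constraint always holds. For `q ∉ S` every sample `T ⊆ S` misses `q`, giving false positive
rate `1/f`; for `q ∈ S` an error needs `q ∉ T`, which has probability `p`, and then occurs with
probability `1 - 1/f`.
-/

open scoped ENNReal

namespace PMF

variable {α β : Type*}

theorem toOuterMeasure_apply_compl (μ : PMF α) (s : Set α) :
    μ.toOuterMeasure sᶜ = 1 - μ.toOuterMeasure s := by
  have hsum : μ.toOuterMeasure s + μ.toOuterMeasure sᶜ = 1 := by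
    rw [toOuterMeasure_apply, toOuterMeasure_apply, ← ENNReal.tsum_add]
    simp only [Set.indicator_self_add_compl_apply, tsum_coe]
  exact ENNReal.eq_sub_of_add_eq' ENNReal.one_ne_top (by rw [add_comm, hsum])

theorem toOuterMeasure_bind_map_prodMk_apply (μ : PMF α) (ν : PMF β) (s : Set (α × β))
    (t : Set α) (c : ℝ≥0∞)
    (hslice : ∀ a ∈ μ.support,
      ν.toOuterMeasure {b | (a, b) ∈ s} = t.indicator (fun _ => c) a) :
    (μ.bind fun a => ν.map (a, ·)).toOuterMeasure s = μ.toOuterMeasure t * c := by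
  rw [toOuterMeasure_bind_apply, toOuterMeasure_apply, ← ENNReal.tsum_mul_right]
  refine tsum_congr fun a => ?_
  rw [toOuterMeasure_map_apply]
  by_cases ha : a ∈ μ.support
  · change μ a * ν.toOuterMeasure {b | (a, b) ∈ s} = _
    rw [hslice a ha]
    by_cases hat : a ∈ t <;> simp [hat]
  · simp [(μ.apply_eq_zero_iff a).mpr ha]

end PMF

section CoordinateIndependent

variable {U F : Type*} [DecidableEq U] {q : U} {g : (U → F) → F}

def coordEqProdEquiv (hg : ∀ h c, g (Function.update h q c) = g h) :
    {h : U → F // h q = g h} × F ≃ (U → F) where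
  toFun x := Function.update x.1.1 q x.2
  invFun h := (⟨Function.update h q (g h), by simp [hg]⟩, h q)
  left_inv := by
    rintro ⟨⟨h, hh⟩, c⟩
    ext
    · simp [hg, ← hh]
    · simp
  right_inv h := by simp

variable [Fintype U] [Fintype F] [Nonempty F]

theorem uniformOfFintype_toOuterMeasure_coord_eq (hg : ∀ h c, g (Function.update h q c) = g h) :
    (PMF.uniformOfFintype (U → F)).toOuterMeasure {h | h q = g h} =
      (Fintype.card F : ℝ≥0∞)⁻¹ := by
  classical
  have hcard : Fintype.card {h : U → F | h q = g h} * Fintype.card F = Fintype.card (U → F) :=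
    (Fintype.card_prod _ _).symm.trans (Fintype.card_congr (coordEqProdEquiv hg))
  have hpos : (Fintype.card {h : U → F | h q = g h} : ℝ≥0∞) ≠ 0 := by
    exact_mod_cast (Nat.pos_of_mul_pos_right (hcard ▸ Fintype.card_pos)).ne'
  rw [PMF.toOuterMeasure_uniformOfFintype_apply, ← hcard, Nat.cast_mul, ENNReal.div_eq_inv_mul,
    ENNReal.mul_inv (Or.inl hpos) (Or.inl (by simp)), mul_comm, ← mul_assoc,
    ENNReal.mul_inv_cancel hpos (by simp), one_mul]

theorem uniformOfFintype_toOuterMeasure_coord_ne (hg : ∀ h c, g (Function.update h q c) = g h) :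
    (PMF.uniformOfFintype (U → F)).toOuterMeasure {h | h q ≠ g h} =
      1 - (Fintype.card F : ℝ≥0∞)⁻¹ := by
  rw [← uniformOfFintype_toOuterMeasure_coord_eq hg, ← PMF.toOuterMeasure_apply_compl]
  rfl

end CoordinateIndependent

namespace IsSubsample

variable {U : Type*} [DecidableEq U] {p : ℝ} {sub : Finset U → PMF (Finset U)}

theorem subset_of_mem_support (hsub : IsSubsample p sub) {S T : Finset U}
    (hT : T ∈ (sub S).support) : T ⊆ S := by
  by_contra hTS
  exact hT (by rw [hsub, if_neg hTS])

theorem apply_eq_ofReal_mul_erase (hsub : IsSubsample p sub) (hp : 0 ≤ p) {S T : Finset U}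
    {q : U} (hq : q ∈ S) (hqT : q ∉ T) :
    sub S T = ENNReal.ofReal p * sub (S.erase q) T := by
  have hiff : T ⊆ S.erase q ↔ T ⊆ S := by
    rw [Finset.subset_erase]
    exact ⟨And.left, fun h => ⟨h, hqT⟩⟩
  rw [hsub, hsub]
  by_cases hTS : T ⊆ S
  · rw [if_pos hTS, if_pos (hiff.mpr hTS)]
    have hcard : S.card - T.card = (S.erase q).card - T.card + 1 := by
      have hle := Finset.card_le_card (hiff.mpr hTS)
      have hpos := Finset.card_pos.mpr ⟨q, hq⟩
      rw [Finset.card_erase_of_mem hq] at hle ⊢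
      omega
    rw [hcard, pow_succ, ← mul_assoc, ENNReal.ofReal_mul' hp, mul_comm]
  · rw [if_neg hTS, if_neg (hiff.not.mpr hTS), mul_zero]

theorem toOuterMeasure_setOf_notMem (hsub : IsSubsample p sub) (hp : 0 ≤ p) {S : Finset U} {q : U}
    (hq : q ∈ S) : (sub S).toOuterMeasure {T | q ∉ T} = ENNReal.ofReal p := by
  have hterm : ∀ T, {T | q ∉ T}.indicator (sub S) T = ENNReal.ofReal p * sub (S.erase q) T := by
    intro T
    by_cases hqT : q ∈ T
    · have hT : ¬ T ⊆ S.erase q := fun h => Finset.notMem_erase q S (h hqT)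
      simp [hqT, hsub (S.erase q) T, hT]
    · simp [hqT, hsub.apply_eq_ofReal_mul_erase hp hq hqT]
  rw [PMF.toOuterMeasure_apply, tsum_congr hterm, ENNReal.tsum_mul_left, PMF.tsum_coe, mul_one]

end IsSubsample

theorem dpset_false_positive_and_false_negative_rates_general
    {U F : Type*} [Fintype U] [DecidableEq U] [Fintype F] [Nonempty F]
    (f : ℕ) (hf : f = Fintype.card F) (hf2 : 2 ≤ f)
    (α p : ℝ) (hα : α = 1 / (f : ℝ)) (hp : p = 1 / ((f : ℝ) - 1))
    (S : Finset U)
    (G : Finset U → (U → F) → (U → F))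
    (hGmem : ∀ (T : Finset U) (h : U → F), ∀ q ∈ T, G T h q = h q)
    (hGloc : ∀ (T : Finset U) (h h' : U → F), (∀ x ∈ T, h x = h' x) → G T h = G T h')
    (sub : Finset U → PMF (Finset U)) (hsub : IsSubsample p sub)
    (joint : PMF (Finset U × (U → F)))
    (hjoint : joint = (sub S).bind
      (fun T => (PMF.uniformOfFintype (U → F)).map (fun h => (T, h)))) :
    (∀ q ∉ S,
        joint.toOuterMeasure {y : Finset U × (U → F) | y.2 q = G y.1 y.2 q} =
          ENNReal.ofReal α) ∧
    (∀ q ∈ S,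
        joint.toOuterMeasure {y : Finset U × (U → F) | y.2 q ≠ G y.1 y.2 q} =
          ENNReal.ofReal (p * (1 - 1 / (f : ℝ)))) ∧
    p * (1 - 1 / (f : ℝ)) = α := by
  have hf1 : (1 : ℝ) < f := by exact_mod_cast hf2
  have hp0 : 0 ≤ p := by rw [hp]; exact (one_div_pos.mpr (by linarith)).le
  have hαE : ENNReal.ofReal α = (Fintype.card F : ℝ≥0∞)⁻¹ := by
    rw [hα, one_div, ENNReal.ofReal_inv_of_pos (by linarith), ← hf, ENNReal.ofReal_natCast]
  have hloc : ∀ {T q}, q ∉ T → ∀ (h : U → F) c, G T (Function.update h q c) q = G T h q :=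
    fun hqT h c => congrFun (hGloc _ _ _ fun x hx =>
      Function.update_of_ne (ne_of_mem_of_not_mem hx hqT) _ _) _
  have hrate : p * (1 - 1 / (f : ℝ)) = α := by
    rw [hp, hα]
    field_simp [(by linarith : (f : ℝ) - 1 ≠ 0)]
  refine ⟨fun q hq => ?_, fun q hq => ?_, hrate⟩
  · rw [hjoint, hαE, PMF.toOuterMeasure_bind_map_prodMk_apply _ _ _ Set.univ _ fun T hT => ?_,
      (PMF.toOuterMeasure_apply_eq_one_iff _ _).mpr (Set.subset_univ _), one_mul]
    have hqT : q ∉ T := fun hqT => hq (hsub.subset_of_mem_support hT hqT)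
    simpa using uniformOfFintype_toOuterMeasure_coord_eq (g := fun h => G T h q) (hloc hqT)
  · rw [hjoint, PMF.toOuterMeasure_bind_map_prodMk_apply _ _ _ {T | q ∉ T}
      (1 - (Fintype.card F : ℝ≥0∞)⁻¹) fun T _ => ?_, hsub.toOuterMeasure_setOf_notMem hp0 hq,
      ENNReal.ofReal_mul hp0, ENNReal.ofReal_sub _ (by positivity), ENNReal.ofReal_one, one_div,
      ENNReal.ofReal_inv_of_pos (by linarith), hf, ENNReal.ofReal_natCast]
    by_cases hqT : q ∈ T
    · simp [hqT, hGmem T _ q hqT]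
    · simpa [hqT] using
        uniformOfFintype_toOuterMeasure_coord_ne (g := fun h => G T h q) (hloc hqT)

theorem dpset_false_positive_and_false_negative_rates
    {U F : Type*} [Fintype U] [DecidableEq U] [Nonempty U] [Fintype F] [Nonempty F]
    (f : ℕ) (hf : f = Fintype.card F) (hf2 : 2 ≤ f)
    (α p : ℝ) (hα : α = 1 / (f : ℝ)) (hp : p = 1 / ((f : ℝ) - 1))
    (S : Finset U)
    (G : Finset U → (U → F) → (U → F))
    (hGmem : ∀ (T : Finset U) (h : U → F), ∀ q ∈ T, G T h q = h q)
    (hGloc : ∀ (T : Finset U) (h h' : U → F), (∀ x ∈ T, h x = h' x) → G T h = G T h')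
    (sub : Finset U → PMF (Finset U)) (hsub : IsSubsample p sub)
    (joint : PMF (Finset U × (U → F)))
    (hjoint : joint = (sub S).bind
      (fun T => (PMF.uniformOfFintype (U → F)).map (fun h => (T, h)))) :
    (∀ q ∉ S,
        joint.toOuterMeasure {y : Finset U × (U → F) | y.2 q = G y.1 y.2 q} =
          ENNReal.ofReal α) ∧
    (∀ q ∈ S,
        joint.toOuterMeasure {y : Finset U × (U → F) | y.2 q ≠ G y.1 y.2 q} =
          ENNReal.ofReal (p * (1 - 1 / (f : ℝ)))) ∧
    p * (1 - 1 / (f : ℝ)) = α :=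
  dpset_false_positive_and_false_negative_rates_general f hf hf2 α p hα hp S G hGmem hGloc sub hsub
    joint hjoint
end
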